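/- For all terms t₁, t₂ of the two-constant term algebra: t₁ ≤ t₂ if and only if shape(t₁) = shape(t₂) and content(t₁) is pointwise below content(t₂), i.e., the two lists have equal length and at every position the boolean of content(t₁) implies the boolean of content(t₂) (false ≤ true). -/
import Mathlib

/-- Terms of the two-constant term algebra: constants `a`, `b` and a binary
constructor `g`. -/
inductive Term : Type
  | a : Term
  | b : Term
  | g (t₁ t₂ : Term) : Term
deriving DecidableEq

/-- The structural subtype order on terms: `a ≤ a`, `a ≤ b`, `b ≤ b`, and `g` is
covariant in both arguments. -/
inductive Term.le : Term → Term → Prop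
  | aa : Term.le Term.a Term.a
  | ab : Term.le Term.a Term.b
  | bb : Term.le Term.b Term.b
  | gg {s₁ s₂ t₁ t₂ : Term} : Term.le s₁ t₁ → Term.le s₂ t₂ →
      Term.le (Term.g s₁ s₂) (Term.g t₁ t₂)

instance : LE Term := ⟨Term.le⟩

/-- Shapes: a constant `cs` and a binary constructor `gs`. -/
inductive Shape : Type
  | cs : Shape
  | gs (s₁ s₂ : Shape) : Shape
deriving DecidableEq

/-- The shape of a term. -/
def Term.shape : Term → Shape
  | Term.a => Shape.cs
  | Term.b => Shape.cs
  | Term.g t₁ t₂ => Shape.gs t₁.shape t₂.shape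

/-- The content of a term: the list of its leaf constants, `a ↦ false`, `b ↦ true`. -/
def Term.content : Term → List Bool
  | Term.a => [false]
  | Term.b => [true]
  | Term.g t₁ t₂ => t₁.content ++ t₂.content

/-- The number of occurrences of the constant `cs` in a shape. -/
def Shape.leafcount : Shape → ℕ
  | Shape.cs => 1
  | Shape.gs s₁ s₂ => s₁.leafcount + s₂.leafcount

lemma content_length (t : Term) : t.content.length = t.shape.leafcount := by
  induction t with
  | a => rfl
  | b => rfl
  | g t₁ t₂ ih₁ ih₂ => simp [Term.content, Term.shape, Shape.leafcount, ih₁, ih₂]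

/-- `t₁ ≤ t₂` iff the terms have the same shape and `content t₁` is pointwise below
`content t₂` (same length, and at every position `false ≤ true` for booleans). -/
theorem le_iff_shape_eq_and_content_le (t₁ t₂ : Term) :
    t₁ ≤ t₂ ↔ t₁.shape = t₂.shape ∧
      List.Forall₂ (fun x y : Bool => x ≤ y) t₁.content t₂.content := by
  constructor
  · intro h
    induction h with
    | aa => exact ⟨rfl, by simp [Term.content]⟩
    | ab => exact ⟨rfl, by simp [Term.content]⟩
    | bb => exact ⟨rfl, by simp [Term.content]⟩
    | gg h₁ h₂ ih₁ ih₂ =>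
      exact ⟨by simp [Term.shape, ih₁.1, ih₂.1],
        List.rel_append ih₁.2 ih₂.2⟩
  · intro ⟨hs, hc⟩
    induction t₁ generalizing t₂ with
    | a =>
      cases t₂ with
      | a => exact Term.le.aa
      | b => exact Term.le.ab
      | g u₁ u₂ => simp [Term.shape] at hs
    | b =>
      cases t₂ with
      | a =>
        simp [Term.content] at hc
        exact absurd hc (by simp)
      | b => exact Term.le.bb
      | g u₁ u₂ => simp [Term.shape] at hs
    | g s₁ s₂ ih₁ ih₂ =>
      cases t₂ with
      | a => simp [Term.shape] at hs
      | b => simp [Term.shape] at hs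
      | g u₁ u₂ =>
        simp only [Term.shape, Shape.gs.injEq] at hs
        have hlen : s₁.content.length = u₁.content.length := by
          rw [content_length, content_length, hs.1]
        simp only [Term.content] at hc
        have := List.forall₂_take (s₁.content.length) hc
        have h1 : List.Forall₂ (fun x y : Bool => x ≤ y) s₁.content u₁.content := by
          simpa [List.take_left, hlen, List.take_left] using this
        have := List.forall₂_drop (s₁.content.length) hc
        have h2 : List.Forall₂ (fun x y : Bool => x ≤ y) s₂.content u₂.content := by
          simpa [List.drop_left, hlen, List.drop_left] using this
        exact Term.le.gg (ih₁ u₁ hs.1 h1) (ih₂ u₂ hs.2 h2)
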